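/- Under the two-set greedy algorithm, for any integers N ≥ 0, K ≥ 1 and 1 ≤ m < K the following product inequality holds: ∏_{i=1}^{K} σ_{N+i}(F̃)² ≤ (K/m)^m · (K/(K−m))^{K−m} · σ_{N+1}(F̃)^{2m} · d_m(F)^{2K−2m}. -/

import Mathlib

open Metric Submodule Module Finset

local notation "⟪" x ", " y "⟫" => @inner ℝ _ _ x y

lemma tsgpi_infDist_eq {H : Type*} [NormedAddCommGroup H] [InnerProductSpace ℝ H]
    (U : Submodule ℝ H) [HasOrthogonalProjection U] (x : H) :
    Metric.infDist x (U : Set H) = ‖x - (orthogonalProjection U x : H)‖ := by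
  apply le_antisymm
  · simpa [dist_eq_norm] using
      Metric.infDist_le_dist_of_mem (SetLike.coe_mem (orthogonalProjection U x))
  · rw [show ‖x - (orthogonalProjection U x : H)‖ = ⨅ y : U, ‖x - y‖ from Submodule.starProjection_minimal (U := U) x, Metric.infDist_eq_iInf]
    haveI : Nonempty (U : Set H) := ⟨⟨0, U.zero_mem⟩⟩
    refine le_ciInf fun y => ?_
    refine ciInf_le_of_le ⟨0, ?_⟩ (⟨y, y.2⟩ : U) (by rw [dist_eq_norm])
    rintro r ⟨z, rfl⟩; exact norm_nonneg _

lemma tsgpi_hadamard (k : ℕ) (w : Fin k → EuclideanSpace ℝ (Fin k)) :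
    |((EuclideanSpace.basisFun (Fin k) ℝ).toBasis.det w)| ≤ ∏ i, ‖w i‖ := by
  have hdim : finrank ℝ (EuclideanSpace ℝ (Fin k)) = Fintype.card (Fin k) := by simp
  haveI : WellFoundedLT (Fin k) := inferInstance
  set b := InnerProductSpace.gramSchmidtOrthonormalBasis hdim w with hb
  have h1 : b.toBasis.det w = ∏ i, ⟪b i, w i⟫ := InnerProductSpace.gramSchmidtOrthonormalBasis_det hdim w
  have h2 : (EuclideanSpace.basisFun (Fin k) ℝ).toBasis.det w
      = (EuclideanSpace.basisFun (Fin k) ℝ).toBasis.det ⇑b * b.toBasis.det w := by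
    rw [Basis.det_apply, Basis.det_apply, Basis.det_apply, ← Matrix.det_mul]
    congr 1
    rw [← b.coe_toBasis, Basis.toMatrix_mul_toMatrix]
  rw [h2, abs_mul]
  have h3 : |(EuclideanSpace.basisFun (Fin k) ℝ).toBasis.det ⇑b| = 1 := by
    rcases (EuclideanSpace.basisFun (Fin k) ℝ).det_to_matrix_orthonormalBasis_real b with h | h <;>
      rw [h] <;> norm_num
  rw [h3, one_mul, h1, Finset.abs_prod]
  refine Finset.prod_le_prod (fun i _ => abs_nonneg _) fun i _ => ?_
  calc |⟪b i, w i⟫| ≤ ‖b i‖ * ‖w i‖ := abs_real_inner_le_norm _ _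
    _ = ‖w i‖ := by rw [b.orthonormal.1 i, one_mul]

set_option maxHeartbeats 2000000 in
lemma tsgpi_core {k m : ℕ} (hm : 1 ≤ m) (hmk : m < k)
    (v : Fin k → EuclideanSpace ℝ (Fin k)) (W : Submodule ℝ (EuclideanSpace ℝ (Fin k)))
    (hW : finrank ℝ W ≤ m) {M ε : ℝ} (hM : 0 < M) (hε : 0 < ε)
    (hv : ∀ i, ‖v i‖ ≤ M) (hd : ∀ i, Metric.infDist (v i) (W : Set (EuclideanSpace ℝ (Fin k))) ≤ ε) :
    ((EuclideanSpace.basisFun (Fin k) ℝ).toBasis.det v)^2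
      ≤ ((k:ℝ)/m)^m * ((k:ℝ)/((k:ℝ)-m))^(k-m) * M^(2*m) * ε^(2*(k-m)) := by
  set p := k - m with hpdef
  have hkmp : k = m + p := by omega
  have hp1 : 1 ≤ p := by omega
  -- adapted orthonormal basis
  have hfr : finrank ℝ (EuclideanSpace ℝ (Fin k)) = k := by simp
  have hWp : p ≤ finrank ℝ (Wᗮ : Submodule ℝ (EuclideanSpace ℝ (Fin k))) := by
    have h := Submodule.finrank_add_finrank_orthogonal W
    rw [hfr] at h; omega
  set c := stdOrthonormalBasis ℝ (Wᗮ : Submodule ℝ (EuclideanSpace ℝ (Fin k))) with hc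
  set φ : Fin k → EuclideanSpace ℝ (Fin k) :=
    fun j => if h : (j : ℕ) < p then (c ⟨j, lt_of_lt_of_le h hWp⟩ : EuclideanSpace ℝ (Fin k)) else 0
    with hφdef
  have hφ : Orthonormal ℝ (Set.restrict {j : Fin k | (j : ℕ) < p} φ) := by
    constructor
    · rintro ⟨j, hj⟩
      have hj' : (j : ℕ) < p := hj
      simp only [Set.restrict_apply, hφdef, dif_pos hj']
      change ‖(if h : (j : ℕ) < p then (c ⟨j, lt_of_lt_of_le h hWp⟩ : EuclideanSpace ℝ (Fin k)) else 0)‖ = 1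
      rw [dif_pos hj']
      rw [Submodule.norm_coe]
      exact c.orthonormal.1 _
    · rintro ⟨j, hj⟩ ⟨j', hj'⟩ hne
      have h1 : (j : ℕ) < p := hj
      have h2 : (j' : ℕ) < p := hj'
      simp only [Set.restrict_apply, hφdef, dif_pos h1, dif_pos h2]
      change ⟪(if h : (j : ℕ) < p then (c ⟨j, lt_of_lt_of_le h hWp⟩ : EuclideanSpace ℝ (Fin k)) else 0), (if h : (j' : ℕ) < p then (c ⟨j', lt_of_lt_of_le h hWp⟩ : EuclideanSpace ℝ (Fin k)) else 0)⟫ = 0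
      rw [dif_pos h1, dif_pos h2]
      rw [← Submodule.coe_inner]
      refine c.orthonormal.2 ?_
      simp only [ne_eq, Fin.mk.injEq, Fin.val_inj]
      exact fun h => hne (Subtype.ext (by exact_mod_cast h))
  obtain ⟨b, hb⟩ := hφ.exists_orthonormalBasis_extension_of_card_eq (by simp)
  have hbW : ∀ j : Fin k, (j : ℕ) < p → b j ∈ (Wᗮ : Submodule ℝ (EuclideanSpace ℝ (Fin k))) := by
    intro j hj
    rw [hb j hj]
    simp only [hφdef, dif_pos hj]
    exact SetLike.coe_mem _
  -- scaling parameter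
  set τ : ℝ := m * ε ^ 2 / (p * M ^ 2) with hτdef
  have hτ : 0 < τ := by positivity
  set t : ℝ := Real.sqrt τ with htdef
  have ht2 : t ^ 2 = τ := Real.sq_sqrt hτ.le
  have ht : 0 < t := Real.sqrt_pos.mpr hτ
  set s : Fin k → ℝ := fun j => if (j : ℕ) < p then 1 else t with hsdef
  -- matrices
  set M₀ : Matrix (Fin k) (Fin k) ℝ := b.toBasis.toMatrix v with hM₀
  set X : Matrix (Fin k) (Fin k) ℝ := Matrix.of (fun j i => s j * ⟪b j, v i⟫) with hX
  have hXent : ∀ j i, X j i = s j * ⟪b j, v i⟫ := fun _ _ => rfl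
  set w : Fin k → EuclideanSpace ℝ (Fin k) := fun i => WithLp.toLp 2 (fun j => s j * ⟪b j, v i⟫) with hw
  have hpk : p ≤ k := by omega
  have hcardlt : (Finset.univ.filter (fun j : Fin k => (j:ℕ) < p)).card = p := by
    have heq : (Finset.univ.filter (fun j : Fin k => (j:ℕ) < p))
        = Finset.map (Fin.castLEEmb hpk) Finset.univ := by
      ext j
      simp only [Finset.mem_filter, Finset.mem_univ, true_and, Finset.mem_map, Fin.castLEEmb]
      constructor
      · intro hj
        refine ⟨⟨(j:ℕ), hj⟩, ?_⟩
        ext; simp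
      · rintro ⟨i, -, rfl⟩; simp
    rw [heq, Finset.card_map, Finset.card_univ, Fintype.card_fin]
  have hcardge : (Finset.univ.filter (fun j : Fin k => ¬((j:ℕ) < p))).card = m := by
    have h := Finset.card_filter_add_card_filter_not
      (s := (Finset.univ : Finset (Fin k))) (p := fun j : Fin k => (j:ℕ) < p)
    rw [Finset.card_univ, Fintype.card_fin, hcardlt] at h
    omega
  have hprods : ∏ j, s j = t ^ m := by
    rw [hsdef, Finset.prod_ite, Finset.prod_const_one, Finset.prod_const, one_mul, hcardge]
  have hXeq : X = Matrix.diagonal s * M₀ := by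
    ext j i
    rw [hXent j i, Matrix.diagonal_mul, hM₀, Basis.toMatrix_apply, b.coe_toBasis_repr_apply,
      b.repr_apply_apply]
  have hdetX : X.det = t ^ m * M₀.det := by
    rw [hXeq, Matrix.det_mul, Matrix.det_diagonal, hprods]
  have hdetM₀ : M₀.det ^ 2 = ((EuclideanSpace.basisFun (Fin k) ℝ).toBasis.det v) ^ 2 := by
    have hsplit : (EuclideanSpace.basisFun (Fin k) ℝ).toBasis.toMatrix v
        = (EuclideanSpace.basisFun (Fin k) ℝ).toBasis.toMatrix ⇑b * M₀ := by
      rw [hM₀, ← b.coe_toBasis, Basis.toMatrix_mul_toMatrix]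
    have h1 : ((EuclideanSpace.basisFun (Fin k) ℝ).toBasis.toMatrix ⇑b).det ^ 2 = 1 := by
      rcases (EuclideanSpace.basisFun (Fin k) ℝ).det_to_matrix_orthonormalBasis_real b with h | h <;>
        · rw [Basis.det_apply] at h
          rw [h]; norm_num
    rw [Basis.det_apply, hsplit, Matrix.det_mul, mul_pow, h1, one_mul]
  have hdetw : (EuclideanSpace.basisFun (Fin k) ℝ).toBasis.det w = X.det := by
    have hmat : (EuclideanSpace.basisFun (Fin k) ℝ).toBasis.toMatrix w = X := by
      ext j i
      rw [Basis.toMatrix_apply, hXent j i]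
      simp [EuclideanSpace.basisFun, hw]
    rw [Basis.det_apply, hmat]
  -- column norms
  have hwnorm : ∀ i, ‖w i‖ ^ 2 ≤ τ * M ^ 2 + ε ^ 2 := by
    intro i
    have hnrm : ‖w i‖ ^ 2 = ∑ j, (s j * ⟪b j, v i⟫) ^ 2 := by
      rw [EuclideanSpace.norm_eq, Real.sq_sqrt (by positivity)]
      refine Finset.sum_congr rfl fun j _ => ?_
      simp only [hw, PiLp.toLp_apply, Real.norm_eq_abs, sq_abs]
    set Pr : EuclideanSpace ℝ (Fin k) :=
      (orthogonalProjection W (v i) : EuclideanSpace ℝ (Fin k)) with hPr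
    have hxε : ‖v i - Pr‖ ≤ ε := by
      rw [hPr, ← tsgpi_infDist_eq]; exact hd i
    have hB1 : ∑ j ∈ Finset.univ.filter (fun j : Fin k => (j:ℕ) < p), ⟪b j, v i⟫ ^ 2 ≤ ε ^ 2 := by
      have hre : ∀ j ∈ Finset.univ.filter (fun j : Fin k => (j:ℕ) < p),
          ⟪b j, v i⟫ ^ 2 = ⟪b j, v i - Pr⟫ ^ 2 := by
        intro j hj
        have hj' : (j:ℕ) < p := by simpa using hj
        have horth : ⟪b j, Pr⟫ = 0 := by
          rw [real_inner_comm]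
          exact (Submodule.mem_orthogonal W (b j)).mp (hbW j hj') Pr (SetLike.coe_mem _)
        rw [inner_sub_right, horth, sub_zero]
      calc ∑ j ∈ Finset.univ.filter (fun j : Fin k => (j:ℕ) < p), ⟪b j, v i⟫ ^ 2
          = ∑ j ∈ Finset.univ.filter (fun j : Fin k => (j:ℕ) < p), ⟪b j, v i - Pr⟫ ^ 2 :=
            Finset.sum_congr rfl hre
        _ ≤ ‖v i - Pr‖ ^ 2 := by
            have hbess := b.orthonormal.sum_inner_products_le (v i - Pr)
              (s := Finset.univ.filter (fun j : Fin k => (j:ℕ) < p))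
            simpa [Real.norm_eq_abs, sq_abs] using hbess
        _ ≤ ε ^ 2 := by nlinarith [norm_nonneg (v i - Pr)]
    have hB2 : ∑ j ∈ Finset.univ.filter (fun j : Fin k => ¬((j:ℕ) < p)), ⟪b j, v i⟫ ^ 2
        ≤ M ^ 2 := by
      have hbess := b.orthonormal.sum_inner_products_le (v i)
        (s := Finset.univ.filter (fun j : Fin k => ¬((j:ℕ) < p)))
      have h2 : ‖v i‖ ^ 2 ≤ M ^ 2 := by nlinarith [norm_nonneg (v i), hv i]
      calc ∑ j ∈ Finset.univ.filter (fun j : Fin k => ¬((j:ℕ) < p)), ⟪b j, v i⟫ ^ 2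
          ≤ ‖v i‖ ^ 2 := by simpa [Real.norm_eq_abs, sq_abs] using hbess
        _ ≤ M ^ 2 := h2
    calc ‖w i‖ ^ 2 = ∑ j, (s j * ⟪b j, v i⟫) ^ 2 := hnrm
      _ = ∑ j ∈ Finset.univ.filter (fun j : Fin k => (j:ℕ) < p), ⟪b j, v i⟫ ^ 2
          + ∑ j ∈ Finset.univ.filter (fun j : Fin k => ¬((j:ℕ) < p)), (t * ⟪b j, v i⟫) ^ 2 := by
          rw [← Finset.sum_filter_add_sum_filter_not Finset.univ (fun j : Fin k => (j:ℕ) < p)]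
          congr 1
          · refine Finset.sum_congr rfl fun j hj => ?_
            have hj' : (j:ℕ) < p := by simpa using hj
            simp only [hsdef, if_pos hj', one_mul]
          · refine Finset.sum_congr rfl fun j hj => ?_
            have hj' : ¬((j:ℕ) < p) := by simpa using hj
            simp only [hsdef, if_neg hj']
      _ = ∑ j ∈ Finset.univ.filter (fun j : Fin k => (j:ℕ) < p), ⟪b j, v i⟫ ^ 2
          + τ * ∑ j ∈ Finset.univ.filter (fun j : Fin k => ¬((j:ℕ) < p)), ⟪b j, v i⟫ ^ 2 := by
          rw [Finset.mul_sum]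
          congr 1
          refine Finset.sum_congr rfl fun j hj => ?_
          rw [mul_pow, ht2]
      _ ≤ ε ^ 2 + τ * M ^ 2 := add_le_add hB1 (mul_le_mul_of_nonneg_left hB2 hτ.le)
      _ = τ * M ^ 2 + ε ^ 2 := by ring
  -- Hadamard
  have hHad : X.det ^ 2 ≤ (τ * M ^ 2 + ε ^ 2) ^ k := by
    have h1 := tsgpi_hadamard k w
    rw [hdetw] at h1
    calc X.det ^ 2 = |X.det| ^ 2 := (sq_abs _).symm
      _ ≤ (∏ i, ‖w i‖) ^ 2 := by
          refine pow_le_pow_left₀ (abs_nonneg _) h1 2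
      _ = ∏ i : Fin k, ‖w i‖ ^ 2 := by rw [← Finset.prod_pow]
      _ ≤ ∏ i : Fin k, (τ * M ^ 2 + ε ^ 2) := by
          refine Finset.prod_le_prod (fun i _ => sq_nonneg _) fun i _ => hwnorm i
      _ = (τ * M ^ 2 + ε ^ 2) ^ k := by rw [Finset.prod_const, Finset.card_univ, Fintype.card_fin]
  -- conclude by algebra
  have hkey : τ ^ m * ((EuclideanSpace.basisFun (Fin k) ℝ).toBasis.det v) ^ 2
      ≤ (τ * M ^ 2 + ε ^ 2) ^ k := by
    calc τ ^ m * ((EuclideanSpace.basisFun (Fin k) ℝ).toBasis.det v) ^ 2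
        = (t ^ m) ^ 2 * M₀.det ^ 2 := by rw [hdetM₀, ← ht2]; ring
      _ = X.det ^ 2 := by rw [hdetX, mul_pow]
      _ ≤ _ := hHad
  have hrhs : ((k:ℝ)/m)^m * ((k:ℝ)/((k:ℝ)-m))^(k-m) * M^(2*m) * ε^(2*(k-m)) * τ ^ m
      = (τ * M ^ 2 + ε ^ 2) ^ k := by
    have hmR : (0:ℝ) < m := by have h0 : 0 < m := by omega
                               exact_mod_cast h0
    have hpR : (0:ℝ) < p := by have h0 : 0 < p := by omega
                               exact_mod_cast h0
    have hkR : (k:ℝ) = (m:ℝ) + (p:ℝ) := by exact_mod_cast hkmp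
    have hkm : (k:ℝ) - (m:ℝ) = (p:ℝ) := by rw [hkR]; ring
    have e1 : τ * M ^ 2 + ε ^ 2 = ε ^ 2 * k / p := by
      rw [hτdef, hkR]; field_simp
    have e2 : (k:ℝ)/m * M ^ 2 * τ = ε ^ 2 * k / p := by
      rw [hτdef]; field_simp
    have e3 : (k:ℝ)/p * ε ^ 2 = ε ^ 2 * k / p := by ring
    calc ((k:ℝ)/m)^m * ((k:ℝ)/((k:ℝ)-m))^p * M^(2*m) * ε^(2*p) * τ ^ m
        = ((k:ℝ)/m * M ^ 2 * τ)^m * ((k:ℝ)/p * ε ^ 2)^p := by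
          rw [hkm, pow_mul, pow_mul, mul_pow, mul_pow, mul_pow]; ring
      _ = (ε ^ 2 * k / p) ^ m * (ε ^ 2 * k / p) ^ p := by rw [e2, e3]
      _ = (ε ^ 2 * k / p) ^ (m + p) := (pow_add _ m p).symm
      _ = (τ * M ^ 2 + ε ^ 2) ^ k := by rw [← e1, ← hkmp]
  have hτm : 0 < τ ^ m := pow_pos hτ m
  nlinarith [hkey, hrhs, sq_nonneg ((EuclideanSpace.basisFun (Fin k) ℝ).toBasis.det v)]
set_option maxHeartbeats 4000000 in
set_option synthInstance.maxHeartbeats 400000 in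
/-- Two-set greedy algorithm in a Hilbert space: product inequality between the
greedy errors `σ_n(F̃)` and the Kolmogorov width `d_m(F)` (Theorem 3.1). -/
theorem two_set_greedy_product_inequality
    {H : Type*} [NormedAddCommGroup H] [InnerProductSpace ℝ H]
    (F Ftil : Set H) (hsub : Ftil ⊆ F) (hcomp : IsCompact F)
    (hbound : ∀ f ∈ F, ‖f‖ ≤ 1)
    (f : ℕ → H) (hmem : ∀ n, f n ∈ Ftil)
    (hgreedy : ∀ n : ℕ,
      Metric.infDist (f n) ((Submodule.span ℝ (f '' Set.Iio n) : Submodule ℝ H) : Set H)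
        = ⨆ g : Ftil, Metric.infDist (g : H)
            ((Submodule.span ℝ (f '' Set.Iio n) : Submodule ℝ H) : Set H))
    (N K m : ℕ) (hK : 1 ≤ K) (hm : 1 ≤ m) (hmK : m < K) :
    (∏ i ∈ Finset.Icc 1 K,
        (⨆ g : Ftil, Metric.infDist (g : H)
            ((Submodule.span ℝ (f '' Set.Iio (N + i)) : Submodule ℝ H) : Set H)) ^ 2)
      ≤ ((K : ℝ) / m) ^ m * ((K : ℝ) / ((K : ℝ) - (m : ℝ))) ^ (K - m)
          * (⨆ g : Ftil, Metric.infDist (g : H)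
              ((Submodule.span ℝ (f '' Set.Iio (N + 1)) : Submodule ℝ H) : Set H)) ^ (2 * m)
          * (⨅ Y : {Y : Submodule ℝ H // Module.rank ℝ Y ≤ m},
              ⨆ g : F, Metric.infDist (g : H) ((Y : Submodule ℝ H) : Set H)) ^ (2 * K - 2 * m) := by
  classical
  haveI : Nonempty Ftil := ⟨⟨f 0, hmem 0⟩⟩
  haveI : Nonempty F := ⟨⟨f 0, hsub (hmem 0)⟩⟩
  haveI : Nonempty {Y : Submodule ℝ H // Module.rank ℝ Y ≤ m} :=
    ⟨⟨⊥, by simp⟩⟩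
  -- bounded families
  have hbddFtil : ∀ n : ℕ, BddAbove (Set.range fun g : Ftil =>
      Metric.infDist (g : H) ((Submodule.span ℝ (f '' Set.Iio n) : Submodule ℝ H) : Set H)) := by
    intro n
    refine ⟨1, ?_⟩
    rintro x ⟨g, rfl⟩
    calc Metric.infDist (g : H) ((Submodule.span ℝ (f '' Set.Iio n) : Submodule ℝ H) : Set H)
        ≤ dist (g : H) 0 := Metric.infDist_le_dist_of_mem (Submodule.zero_mem _)
      _ = ‖(g : H)‖ := by rw [dist_zero_right]
      _ ≤ 1 := hbound _ (hsub g.2)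
  have hbddF : ∀ Y : Submodule ℝ H, BddAbove (Set.range fun g : F =>
      Metric.infDist (g : H) (Y : Set H)) := by
    intro Y
    refine ⟨1, ?_⟩
    rintro x ⟨g, rfl⟩
    calc Metric.infDist (g : H) (Y : Set H)
        ≤ dist (g : H) 0 := Metric.infDist_le_dist_of_mem (Submodule.zero_mem _)
      _ = ‖(g : H)‖ := by rw [dist_zero_right]
      _ ≤ 1 := hbound _ g.2
  -- the Kolmogorov width is nonnegative
  have hdnonneg : 0 ≤ ⨅ Y : {Y : Submodule ℝ H // Module.rank ℝ Y ≤ m},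
      ⨆ g : F, Metric.infDist (g : H) ((Y : Submodule ℝ H) : Set H) :=
    Real.iInf_nonneg fun Y => Real.iSup_nonneg fun g => Metric.infDist_nonneg
  -- rewrite the left-hand side
  have hLHSeq : (∏ i ∈ Finset.Icc 1 K,
        (⨆ g : Ftil, Metric.infDist (g : H)
            ((Submodule.span ℝ (f '' Set.Iio (N + i)) : Submodule ℝ H) : Set H)) ^ 2)
      = (∏ i : Fin K, Metric.infDist (f (N + 1 + (i : ℕ)))
          ((Submodule.span ℝ (f '' Set.Iio (N + 1 + (i : ℕ))) : Submodule ℝ H) : Set H)) ^ 2 := by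
    rw [← Finset.prod_pow]
    rw [← Finset.Ico_add_one_right_eq_Icc, Finset.prod_Ico_eq_prod_range]
    rw [Fin.prod_univ_eq_prod_range (fun i => (Metric.infDist (f (N + 1 + i))
          ((Submodule.span ℝ (f '' Set.Iio (N + 1 + i)) : Submodule ℝ H) : Set H)) ^ 2) K]
    have hKK : K + 1 - 1 = K := by omega
    rw [hKK]
    refine Finset.prod_congr rfl fun i _ => ?_
    have hni : N + (1 + i) = N + 1 + i := by omega
    rw [hni, ← hgreedy (N + 1 + i)]
  rw [hLHSeq, ← hgreedy (N + 1)]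
  by_cases hdeg : ∃ i : Fin K, Metric.infDist (f (N + 1 + (i : ℕ)))
      ((Submodule.span ℝ (f '' Set.Iio (N + 1 + (i : ℕ))) : Submodule ℝ H) : Set H) = 0
  · obtain ⟨i0, hi0⟩ := hdeg
    rw [Finset.prod_eq_zero (Finset.mem_univ i0) hi0]
    rw [show ((0:ℝ)) ^ 2 = 0 by norm_num]
    refine mul_nonneg (mul_nonneg (mul_nonneg ?_ ?_) ?_) ?_
    · exact pow_nonneg (by positivity) m
    · refine pow_nonneg (div_nonneg (by positivity) ?_) (K - m)
      have : (m : ℝ) ≤ (K : ℝ) := by exact_mod_cast hmK.le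
      linarith
    · exact pow_nonneg Metric.infDist_nonneg (2 * m)
    · exact pow_nonneg hdnonneg (2 * K - 2 * m)
  · push_neg at hdeg
    have hpos : ∀ i : Fin K, 0 < Metric.infDist (f (N + 1 + (i : ℕ)))
        ((Submodule.span ℝ (f '' Set.Iio (N + 1 + (i : ℕ))) : Submodule ℝ H) : Set H) :=
      fun i => lt_of_le_of_ne Metric.infDist_nonneg (Ne.symm (hdeg i))
    -- orthogonal projections onto the greedy spaces
    have hchoice : ∀ (x : H) (n : ℕ), ∃ q : H, q ∈ Submodule.span ℝ (f '' Set.Iio n) ∧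
        ‖x - q‖ = Metric.infDist x ((Submodule.span ℝ (f '' Set.Iio n) : Submodule ℝ H) : Set H) ∧
        x - q ∈ (Submodule.span ℝ (f '' Set.Iio n))ᗮ := by
      intro x n
      haveI : FiniteDimensional ℝ (Submodule.span ℝ (f '' Set.Iio n)) :=
        FiniteDimensional.span_of_finite ℝ ((Set.finite_Iio n).image f)
      exact ⟨orthogonalProjection (Submodule.span ℝ (f '' Set.Iio n)) x, SetLike.coe_mem _,
        (tsgpi_infDist_eq _ x).symm, Submodule.sub_starProjection_mem_orthogonal (K := Submodule.span ℝ (f '' Set.Iio n)) x⟩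
    choose r hrmem hrnorm hrorth using hchoice
    set u : ℕ → H := fun n => f n - r (f n) n with hu
    have hunorm : ∀ n, ‖u n‖ = Metric.infDist (f n)
        ((Submodule.span ℝ (f '' Set.Iio n) : Submodule ℝ H) : Set H) := fun n => hrnorm (f n) n
    have hupos : ∀ i : Fin K, 0 < ‖u (N + 1 + (i : ℕ))‖ := by
      intro i; rw [hunorm]; exact hpos i
    have huorth : ∀ n, u n ∈ (Submodule.span ℝ (f '' Set.Iio n))ᗮ := fun n => hrorth (f n) n
    have humem : ∀ a b : ℕ, a < b → u a ∈ Submodule.span ℝ (f '' Set.Iio b) := by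
      intro a b hab
      refine Submodule.sub_mem _ (Submodule.subset_span ⟨a, hab, rfl⟩) ?_
      exact Submodule.span_mono (Set.image_mono (Set.Iio_subset_Iio hab.le)) (hrmem (f a) a)
    have huu : ∀ a b : ℕ, a < b → ⟪u a, u b⟫ = 0 := fun a b hab =>
      (Submodule.mem_orthogonal _ _).mp (huorth b) (u a) (humem a b hab)
    -- the orthonormal system
    set en : Fin K → H := fun j => ‖u (N + 1 + (j : ℕ))‖⁻¹ • u (N + 1 + (j : ℕ)) with hen
    have hON : Orthonormal ℝ en := by
      constructor
      · intro j
        exact norm_smul_inv_norm (norm_pos_iff.mp (hupos j))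
      · intro i j hne
        simp only [hen]
        rw [real_inner_smul_left, real_inner_smul_right]
        rcases lt_or_gt_of_ne (fun h : (i : ℕ) = (j : ℕ) => hne (Fin.ext h)) with h | h
        · rw [huu _ _ (by omega), mul_zero, mul_zero]
        · rw [real_inner_comm, huu _ _ (by omega), mul_zero, mul_zero]
    have hBess : ∀ x : H, ∑ j : Fin K, ⟪en j, x⟫ ^ 2 ≤ ‖x‖ ^ 2 := by
      intro x
      simpa [Real.norm_eq_abs, sq_abs] using
        hON.sum_inner_products_le x (s := (Finset.univ : Finset (Fin K)))
    -- the coordinate map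
    set T : H →ₗ[ℝ] EuclideanSpace ℝ (Fin K) :=
      (WithLp.linearEquiv 2 ℝ (∀ _ : Fin K, ℝ)).symm.toLinearMap.comp
        (LinearMap.pi (fun j : Fin K => ((innerSL ℝ (en j)).toLinearMap))) with hT
    have hTapp : ∀ (x : H) (j : Fin K), T x j = ⟪en j, x⟫ := fun x j => rfl
    have hTnormsq : ∀ x : H, ‖T x‖ ^ 2 ≤ ‖x‖ ^ 2 := by
      intro x
      have h1 : ‖T x‖ ^ 2 = ∑ j : Fin K, ⟪en j, x⟫ ^ 2 := by
        rw [EuclideanSpace.norm_eq, Real.sq_sqrt (by positivity)]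
        exact Finset.sum_congr rfl fun j _ => by rw [hTapp, Real.norm_eq_abs, sq_abs]
      rw [h1]; exact hBess x
    have hTnorm : ∀ x : H, ‖T x‖ ≤ ‖x‖ := by
      intro x
      nlinarith [hTnormsq x, norm_nonneg (T x), norm_nonneg x]
    -- the vectors
    set v : Fin K → EuclideanSpace ℝ (Fin K) := fun i => T (f (N + 1 + (i : ℕ))) with hv
    have hvapp : ∀ i j : Fin K, v i j = ⟪en j, f (N + 1 + (i : ℕ))⟫ := fun i j => rfl
    -- entries of the matrix vanish above the diagonal
    have henperp : ∀ (j : Fin K) (n : ℕ), n ≤ N + 1 + (j : ℕ) →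
        en j ∈ (Submodule.span ℝ (f '' Set.Iio n))ᗮ := by
      intro j n hn
      refine Submodule.smul_mem _ _ ?_
      exact Submodule.orthogonal_le
        (Submodule.span_mono (Set.image_mono (Set.Iio_subset_Iio hn))) (huorth _)
    have hvz : ∀ i j : Fin K, (i : ℕ) < (j : ℕ) → v i j = 0 := by
      intro i j hij
      rw [hvapp]
      have hfm : f (N + 1 + (i : ℕ)) ∈ Submodule.span ℝ (f '' Set.Iio (N + 1 + (j : ℕ))) :=
        Submodule.subset_span ⟨N + 1 + (i : ℕ), Set.mem_Iio.mpr (by omega), rfl⟩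
      have := henperp j (N + 1 + (j : ℕ)) le_rfl
      rw [real_inner_comm]
      exact (Submodule.mem_orthogonal _ _).mp this _ hfm
    have hvdiag : ∀ i : Fin K, v i i = Metric.infDist (f (N + 1 + (i : ℕ)))
        ((Submodule.span ℝ (f '' Set.Iio (N + 1 + (i : ℕ))) : Submodule ℝ H) : Set H) := by
      intro i
      rw [hvapp, ← hunorm]
      have hsplit : f (N + 1 + (i : ℕ)) = u (N + 1 + (i : ℕ)) + r (f (N + 1 + (i : ℕ))) (N + 1 + (i : ℕ)) := by
        simp [hu]
      rw [hen]
      rw [real_inner_smul_left, hsplit, inner_add_right]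
      have h0 : ⟪u (N + 1 + (i : ℕ)), r (f (N + 1 + (i : ℕ))) (N + 1 + (i : ℕ))⟫ = 0 := by
        rw [real_inner_comm]
        exact (Submodule.mem_orthogonal _ _).mp (huorth _) _ (hrmem _ _)
      rw [h0, add_zero, real_inner_self_eq_norm_sq]
      have := hupos i
      field_simp
    -- the determinant identity
    have hdet : ((EuclideanSpace.basisFun (Fin K) ℝ).toBasis.det v)
        = ∏ i : Fin K, Metric.infDist (f (N + 1 + (i : ℕ)))
            ((Submodule.span ℝ (f '' Set.Iio (N + 1 + (i : ℕ))) : Submodule ℝ H) : Set H) := by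
      have hent : ∀ a b : Fin K,
          ((EuclideanSpace.basisFun (Fin K) ℝ).toBasis.toMatrix v) a b = v b a := by
        intro a b
        rw [Basis.toMatrix_apply]
        simp [EuclideanSpace.basisFun]
      have htri : (((EuclideanSpace.basisFun (Fin K) ℝ).toBasis.toMatrix v)).BlockTriangular id := by
        intro a b hab
        rw [hent]
        exact hvz b a hab
      rw [Basis.det_apply, Matrix.det_of_upperTriangular htri]
      refine Finset.prod_congr rfl fun i _ => ?_
      rw [hent, hvdiag]
    -- norm bounds on the vectors
    have hMDle : ∀ n : ℕ, Metric.infDist (f n)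
        ((Submodule.span ℝ (f '' Set.Iio (N + 1)) : Submodule ℝ H) : Set H)
        ≤ Metric.infDist (f (N + 1))
            ((Submodule.span ℝ (f '' Set.Iio (N + 1)) : Submodule ℝ H) : Set H) := by
      intro n
      rw [hgreedy (N + 1)]
      exact le_ciSup (hbddFtil (N + 1)) ⟨f n, hmem n⟩
    have hMpos : 0 < Metric.infDist (f (N + 1))
        ((Submodule.span ℝ (f '' Set.Iio (N + 1)) : Submodule ℝ H) : Set H) := by
      have := hpos ⟨0, by omega⟩
      simpa using this
    have hvM : ∀ i : Fin K, ‖v i‖ ≤ Metric.infDist (f (N + 1))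
        ((Submodule.span ℝ (f '' Set.Iio (N + 1)) : Submodule ℝ H) : Set H) := by
      intro i
      have hsq : ‖v i‖ ^ 2 = ∑ j : Fin K, ⟪en j, f (N + 1 + (i : ℕ))⟫ ^ 2 := by
        rw [EuclideanSpace.norm_eq, Real.sq_sqrt (by positivity)]
        exact Finset.sum_congr rfl fun j _ => by
          rw [hvapp i j, Real.norm_eq_abs, sq_abs]
      have hinner : ∀ j : Fin K, ⟪en j, f (N + 1 + (i : ℕ))⟫
          = ⟪en j, f (N + 1 + (i : ℕ)) - r (f (N + 1 + (i : ℕ))) (N + 1)⟫ := by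
        intro j
        have h1 : en j ∈ (Submodule.span ℝ (f '' Set.Iio (N + 1)))ᗮ :=
          henperp j (N + 1) (by omega)
        have h2 : ⟪en j, r (f (N + 1 + (i : ℕ))) (N + 1)⟫ = 0 := by
          rw [real_inner_comm]
          exact (Submodule.mem_orthogonal _ _).mp h1 _ (hrmem _ _)
        rw [inner_sub_right, h2, sub_zero]
      have hle1 : ‖v i‖ ^ 2
          ≤ ‖f (N + 1 + (i : ℕ)) - r (f (N + 1 + (i : ℕ))) (N + 1)‖ ^ 2 := by
        rw [hsq]
        calc ∑ j : Fin K, ⟪en j, f (N + 1 + (i : ℕ))⟫ ^ 2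
            = ∑ j : Fin K, ⟪en j, f (N + 1 + (i : ℕ)) - r (f (N + 1 + (i : ℕ))) (N + 1)⟫ ^ 2 :=
              Finset.sum_congr rfl fun j _ => by rw [hinner j]
          _ ≤ _ := hBess _
      have hle2 : ‖f (N + 1 + (i : ℕ)) - r (f (N + 1 + (i : ℕ))) (N + 1)‖
          ≤ Metric.infDist (f (N + 1))
            ((Submodule.span ℝ (f '' Set.Iio (N + 1)) : Submodule ℝ H) : Set H) := by
        rw [hrnorm _ (N + 1)]
        exact hMDle _
      nlinarith [norm_nonneg (v i),
        norm_nonneg (f (N + 1 + (i : ℕ)) - r (f (N + 1 + (i : ℕ))) (N + 1))]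
    -- the δ-approximation inequality
    have hfinal : ∀ δ : ℝ, 0 < δ →
        ((∏ i : Fin K, Metric.infDist (f (N + 1 + (i : ℕ)))
            ((Submodule.span ℝ (f '' Set.Iio (N + 1 + (i : ℕ))) : Submodule ℝ H) : Set H)) ^ 2)
        ≤ ((K : ℝ) / m) ^ m * ((K : ℝ) / ((K : ℝ) - (m : ℝ))) ^ (K - m)
            * (Metric.infDist (f (N + 1))
                ((Submodule.span ℝ (f '' Set.Iio (N + 1)) : Submodule ℝ H) : Set H)) ^ (2 * m)
            * ((⨅ Y : {Y : Submodule ℝ H // Module.rank ℝ Y ≤ m},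
                ⨆ g : F, Metric.infDist (g : H) ((Y : Submodule ℝ H) : Set H)) + δ) ^ (2 * (K - m)) := by
      intro δ hδ
      obtain ⟨Y, hY⟩ := exists_lt_of_ciInf_lt
        (show (⨅ Y : {Y : Submodule ℝ H // Module.rank ℝ Y ≤ m},
            ⨆ g : F, Metric.infDist (g : H) ((Y : Submodule ℝ H) : Set H))
          < (⨅ Y : {Y : Submodule ℝ H // Module.rank ℝ Y ≤ m},
            ⨆ g : F, Metric.infDist (g : H) ((Y : Submodule ℝ H) : Set H)) + δ by linarith)
      haveI : Module.Finite ℝ (Y : Submodule ℝ H) :=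
        Module.rank_lt_aleph0_iff.mp (lt_of_le_of_lt Y.2 (Cardinal.nat_lt_aleph0 m))
      set W : Submodule ℝ (EuclideanSpace ℝ (Fin K)) :=
        Submodule.map T (Y : Submodule ℝ H) with hWdef
      have hWrank : Module.finrank ℝ W ≤ m :=
        le_trans (finrank_map_le T (Y : Submodule ℝ H)) (finrank_le_of_rank_le Y.2)
      have hYd : ∀ n : ℕ, Metric.infDist (f n) (((Y : Submodule ℝ H) : Submodule ℝ H) : Set H)
          ≤ (⨅ Y : {Y : Submodule ℝ H // Module.rank ℝ Y ≤ m},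
              ⨆ g : F, Metric.infDist (g : H) ((Y : Submodule ℝ H) : Set H)) + δ := fun n =>
        le_of_lt (lt_of_le_of_lt (le_ciSup (hbddF (Y : Submodule ℝ H)) ⟨f n, hsub (hmem n)⟩) hY)
      have hvW : ∀ i : Fin K, Metric.infDist (v i) (W : Set (EuclideanSpace ℝ (Fin K)))
          ≤ (⨅ Y : {Y : Submodule ℝ H // Module.rank ℝ Y ≤ m},
              ⨆ g : F, Metric.infDist (g : H) ((Y : Submodule ℝ H) : Set H)) + δ := by
        intro i
        haveI : Nonempty (((Y : Submodule ℝ H) : Submodule ℝ H) : Set H) :=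
          ⟨⟨0, Submodule.zero_mem _⟩⟩
        have h1 : Metric.infDist (v i) (W : Set (EuclideanSpace ℝ (Fin K)))
            ≤ Metric.infDist (f (N + 1 + (i : ℕ))) (((Y : Submodule ℝ H) : Submodule ℝ H) : Set H) := by
          rw [Metric.infDist_eq_iInf (x := f (N + 1 + (i : ℕ)))
            (s := (((Y : Submodule ℝ H) : Submodule ℝ H) : Set H))]
          refine le_ciInf fun y => ?_
          calc Metric.infDist (v i) (W : Set (EuclideanSpace ℝ (Fin K)))
              ≤ dist (v i) (T (y : H)) :=
                Metric.infDist_le_dist_of_mem (Submodule.mem_map_of_mem y.2)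
            _ ≤ dist (f (N + 1 + (i : ℕ))) (y : H) := by
                rw [dist_eq_norm, dist_eq_norm]
                have heq : v i - T (y : H) = T (f (N + 1 + (i : ℕ)) - (y : H)) := by
                  rw [map_sub]
                exact heq ▸ hTnorm _
        exact h1.trans (hYd _)
      have hεpos : (0:ℝ) < (⨅ Y : {Y : Submodule ℝ H // Module.rank ℝ Y ≤ m},
          ⨆ g : F, Metric.infDist (g : H) ((Y : Submodule ℝ H) : Set H)) + δ := by
        linarith
      have hcore := tsgpi_core hm hmK v W hWrank hMpos hεpos hvM hvW
      rw [← hdet]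
      exact hcore
    -- let δ → 0
    have hexp : 2 * K - 2 * m = 2 * (K - m) := by omega
    rw [hexp]
    have hc : Continuous fun δ : ℝ =>
        ((K : ℝ) / m) ^ m * ((K : ℝ) / ((K : ℝ) - (m : ℝ))) ^ (K - m)
          * (Metric.infDist (f (N + 1))
              ((Submodule.span ℝ (f '' Set.Iio (N + 1)) : Submodule ℝ H) : Set H)) ^ (2 * m)
          * ((⨅ Y : {Y : Submodule ℝ H // Module.rank ℝ Y ≤ m},
              ⨆ g : F, Metric.infDist (g : H) ((Y : Submodule ℝ H) : Set H)) + δ) ^ (2 * (K - m)) := by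
      apply Continuous.mul continuous_const
      exact ((continuous_const.add continuous_id).pow _)
    have hlim : Filter.Tendsto (fun δ : ℝ =>
        ((K : ℝ) / m) ^ m * ((K : ℝ) / ((K : ℝ) - (m : ℝ))) ^ (K - m)
          * (Metric.infDist (f (N + 1))
              ((Submodule.span ℝ (f '' Set.Iio (N + 1)) : Submodule ℝ H) : Set H)) ^ (2 * m)
          * ((⨅ Y : {Y : Submodule ℝ H // Module.rank ℝ Y ≤ m},
              ⨆ g : F, Metric.infDist (g : H) ((Y : Submodule ℝ H) : Set H)) + δ) ^ (2 * (K - m)))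
        (nhdsWithin (0:ℝ) (Set.Ioi 0))
        (nhds (((K : ℝ) / m) ^ m * ((K : ℝ) / ((K : ℝ) - (m : ℝ))) ^ (K - m)
          * (Metric.infDist (f (N + 1))
              ((Submodule.span ℝ (f '' Set.Iio (N + 1)) : Submodule ℝ H) : Set H)) ^ (2 * m)
          * ((⨅ Y : {Y : Submodule ℝ H // Module.rank ℝ Y ≤ m},
              ⨆ g : F, Metric.infDist (g : H) ((Y : Submodule ℝ H) : Set H))) ^ (2 * (K - m)))) := by
      have h0 := hc.tendsto 0
      simp only [add_zero] at h0
      exact h0.mono_left nhdsWithin_le_nhds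
    have hev : ∀ᶠ δ in nhdsWithin (0:ℝ) (Set.Ioi 0),
        ((∏ i : Fin K, Metric.infDist (f (N + 1 + (i : ℕ)))
            ((Submodule.span ℝ (f '' Set.Iio (N + 1 + (i : ℕ))) : Submodule ℝ H) : Set H)) ^ 2)
        ≤ ((K : ℝ) / m) ^ m * ((K : ℝ) / ((K : ℝ) - (m : ℝ))) ^ (K - m)
          * (Metric.infDist (f (N + 1))
              ((Submodule.span ℝ (f '' Set.Iio (N + 1)) : Submodule ℝ H) : Set H)) ^ (2 * m)
          * ((⨅ Y : {Y : Submodule ℝ H // Module.rank ℝ Y ≤ m},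
              ⨆ g : F, Metric.infDist (g : H) ((Y : Submodule ℝ H) : Set H)) + δ) ^ (2 * (K - m)) := by
      filter_upwards [self_mem_nhdsWithin] with δ hδ
      exact hfinal δ hδ
    exact ge_of_tendsto hlim hev
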